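/- For all c, d ≥ 1 and for any client v ∈ C: P( r_1(N(v)) ≥ 2d·Δ_v·(Δ_max(S)/Δ_min(C)) ) ≤ e^{−(1/3)·d·Δ_max(S)}; consequently, with probability at least 1 − n·e^{−(1/3)·d·Δ_max(S)}, it holds that K_1 ≤ (2/c)·(Δ_max(S)/Δ_min(C)). In particular, if Δ_min(C) ≥ η·log²n for a constant η > 0, these bounds hold with high probability. -/

import Mathlib

open MeasureTheory ProbabilityTheory Finset
open scoped ENNReal Classical

noncomputable section

namespace LoadBalancing

/-- State of the ball-assignment process: for each client `v` and ball index `i`,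
whether the ball is still alive (not yet accepted), and for each server a counter
(for SAER: the total number of requests received so far; for RAES: the total number
of accepted requests so far). -/
structure PState (C 𝕊 : Type*) (d : ℕ) where
  alive : C → Fin d → Prop
  total : 𝕊 → ℕ

variable {C 𝕊 Ω : Type*} [Fintype C] [Fintype 𝕊]

/-- The number of balls that server `u` receives in a round in which the set of
alive balls is `al` and the random destinations are given by `σ`. -/
def recvCount {d : ℕ} (al : C → Fin d → Prop) (σ : C → Fin d → 𝕊) (u : 𝕊) : ℕ :=
  (Finset.univ.filter (fun p : C × Fin d => al p.1 p.2 ∧ σ p.1 p.2 = u)).card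

/-- One round of SAER with threshold `τ` (= c·d): `total` counts all requests ever
received; a server is *burned* as soon as `τ ≤ total`, and a burned server rejects
all requests of the current and of all subsequent rounds; non-burned servers accept
all balls received. -/
def sStep {d : ℕ} (τ : ℝ) (σ : C → Fin d → 𝕊) (st : PState C 𝕊 d) : PState C 𝕊 d where
  alive := fun v i => st.alive v i ∧
    τ ≤ ((st.total (σ v i) + recvCount st.alive σ (σ v i) : ℕ) : ℝ)
  total := fun u => st.total u + recvCount st.alive σ u

/-- The SAER state after `t` rounds, where the (random) destination choices of
round `s ≥ 1` are given by `σ s`.  Initially all `d` balls of every client are alive. -/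
def sState {d : ℕ} (τ : ℝ) (σ : ℕ → C → Fin d → 𝕊) : ℕ → PState C 𝕊 d
  | 0 => ⟨fun _ _ => True, fun _ => 0⟩
  | t + 1 => sStep τ (σ (t + 1)) (sState τ σ t)

/-- One round of RAES with threshold `τ` (= c·d): `total` counts the accepted
requests; a server accepts all balls received in the current round unless doing so
would make its number of accepted balls exceed `τ`, in which case it is *saturated*
and rejects all balls received in the current round (but may accept again later). -/
def rStep {d : ℕ} (τ : ℝ) (σ : C → Fin d → 𝕊) (st : PState C 𝕊 d) : PState C 𝕊 d where
  alive := fun v i => st.alive v i ∧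
    τ < ((st.total (σ v i) + recvCount st.alive σ (σ v i) : ℕ) : ℝ)
  total := fun u =>
    if τ < ((st.total u + recvCount st.alive σ u : ℕ) : ℝ) then st.total u
    else st.total u + recvCount st.alive σ u

/-- The RAES state after `t` rounds. -/
def rState {d : ℕ} (τ : ℝ) (σ : ℕ → C → Fin d → 𝕊) : ℕ → PState C 𝕊 d
  | 0 => ⟨fun _ _ => True, fun _ => 0⟩
  | t + 1 => rStep τ (σ (t + 1)) (rState τ σ t)

/-- The destination choices determined by a sample point `ω`. -/
def env {d : ℕ} (choice : ℕ → C → Fin d → Ω → 𝕊) (ω : Ω) : ℕ → C → Fin d → 𝕊 :=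
  fun t v i => choice t v i ω

/-- `a_t^{(i)}(v)`: the `i`-th ball of client `v` is still alive at the beginning of
round `t` (`t ≥ 1`) of SAER. -/
def aliveAt {d : ℕ} (τ : ℝ) (choice : ℕ → C → Fin d → Ω → 𝕊) (t : ℕ) (v : C) (i : Fin d)
    (ω : Ω) : Prop :=
  (sState τ (env choice ω) (t - 1)).alive v i

/-- `r_t(u)`: the number of balls that server `u` receives at round `t` of SAER. -/
def recvAt {d : ℕ} (τ : ℝ) (choice : ℕ → C → Fin d → Ω → 𝕊) (t : ℕ) (u : 𝕊) (ω : Ω) : ℕ :=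
  recvCount (sState τ (env choice ω) (t - 1)).alive (env choice ω t) u

/-- `r_t(N(v))`: the number of balls received at round `t` by the neighbourhood of `v`. -/
def recvNbhd {d : ℕ} (τ : ℝ) (Nb : C → Finset 𝕊) (choice : ℕ → C → Fin d → Ω → 𝕊)
    (t : ℕ) (v : C) (ω : Ω) : ℕ :=
  ∑ u ∈ Nb v, recvAt τ choice t u ω

/-- Server `u` is burned at round `t`: it has received at least `τ = c·d` balls
during rounds `1, …, t`. -/
def burnedAt {d : ℕ} (τ : ℝ) (choice : ℕ → C → Fin d → Ω → 𝕊) (t : ℕ) (u : 𝕊) (ω : Ω) :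
    Prop :=
  τ ≤ ((sState τ (env choice ω) t).total u : ℝ)

/-- `S_t(v)`: the fraction of burned servers in the neighbourhood of `v` at round `t`. -/
def fracBurned {d : ℕ} (τ : ℝ) (Nb : C → Finset 𝕊) (choice : ℕ → C → Fin d → Ω → 𝕊)
    (t : ℕ) (v : C) (ω : Ω) : ℝ :=
  ((Nb v).filter (fun u => burnedAt τ choice t u ω)).card / (Nb v).card

/-- `K_t(v) = (1/(c·d·Δ_v)) · Σ_{s=1}^t r_s(N(v))`. -/
def Kval {d : ℕ} (c : ℝ) (Nb : C → Finset 𝕊) (choice : ℕ → C → Fin d → Ω → 𝕊)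
    (t : ℕ) (v : C) (ω : Ω) : ℝ :=
  (∑ s ∈ Finset.Icc 1 t, (recvNbhd (c * d) Nb choice s v ω : ℝ)) / (c * d * (Nb v).card)

/-- The number of balls alive at the beginning of round `t + 1` (after `t` rounds
of SAER). -/
def aliveNum {d : ℕ} (τ : ℝ) (choice : ℕ → C → Fin d → Ω → 𝕊) (t : ℕ) (ω : Ω) : ℕ :=
  (Finset.univ.filter (fun p : C × Fin d => (sState τ (env choice ω) t).alive p.1 p.2)).card

/-- The work of SAER: every alive ball produces one request message and one answer
message in each round, hence the total number of exchanged messages is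
`2 · Σ_t (number of balls alive at the beginning of round t)`. -/
def workOf {d : ℕ} (τ : ℝ) (choice : ℕ → C → Fin d → Ω → 𝕊) (ω : Ω) : ℝ≥0∞ :=
  2 * ∑' t : ℕ, (aliveNum τ choice t ω : ℝ≥0∞)

/-- The number of balls alive after `t` rounds of RAES. -/
def aliveNumR {d : ℕ} (τ : ℝ) (choice : ℕ → C → Fin d → Ω → 𝕊) (t : ℕ) (ω : Ω) : ℕ :=
  (Finset.univ.filter (fun p : C × Fin d => (rState τ (env choice ω) t).alive p.1 p.2)).card

/-- The work of RAES. -/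
def workOfR {d : ℕ} (τ : ℝ) (choice : ℕ → C → Fin d → Ω → 𝕊) (ω : Ω) : ℝ≥0∞ :=
  2 * ∑' t : ℕ, (aliveNumR τ choice t ω : ℝ≥0∞)

/-- The random environment of the protocol: for every round `t`, client `v` and ball
index `i`, the destination `choice t v i` is uniform on the neighbourhood `Nb v`, and
all these choices (over all rounds, clients and ball indices) are mutually independent. -/
def UnifIndep {d : ℕ} [MeasurableSpace Ω] (P : Measure Ω) (Nb : C → Finset 𝕊)
    (choice : ℕ → C → Fin d → Ω → 𝕊) : Prop :=
  (∀ t v i u, P {ω | choice t v i ω = u}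
      = if u ∈ Nb v then ((Nb v).card : ℝ≥0∞)⁻¹ else 0) ∧
  iIndepFun (m := fun _ : ℕ × C × Fin d => (⊤ : MeasurableSpace 𝕊))
    (fun p ω => choice p.1 p.2.1 p.2.2 ω) P

/-- The degree of a server `u`: the number of clients having `u` in their neighbourhood. -/
def serverDeg (Nb : C → Finset 𝕊) (u : 𝕊) : ℕ :=
  (Finset.univ.filter (fun v => u ∈ Nb v)).card

/-- The bipartite graph given by the neighbourhoods `Nb` is `Δ`-regular. -/
def Regular (Nb : C → Finset 𝕊) (Δ : ℕ) : Prop :=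
  (∀ v, (Nb v).card = Δ) ∧ (∀ u, serverDeg Nb u = Δ)


end LoadBalancing

/-!
In the first round every ball is alive, so `r₁(N(v))` counts how many of the `d·|C|`
independent uniform choices land in `N(v)`. A ball of client `w` lands there with probability
`|N(v) ∩ N(w)| / Δ_w ≤ |N(v) ∩ N(w)| / Δ_min(C)`, and double counting the edges between `N(v)`
and `C` bounds the expected count by `M = d·Δ_v·Δ_max(S)/Δ_min(C) ≥ d·Δ_max(S)`. The Chernoff
bound with weight `2` per hit (exponent `t = log 2`) gives
`P(r₁(N(v)) ≥ 2M) ≤ 2^{-2M}·e^M ≤ e^{-M/3}`, and a union bound over the clients controls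
`K₁(v) = r₁(N(v)) / (c·d·Δ_v)`. If `Δ_min(C) ≥ η log² n` and `log n ≥ 6/η`, then
`d·Δ_max(S) ≥ Δ_min(C) ≥ 6 log n`, so the failure probability is at most `n·n⁻² = n⁻¹`.
-/

section Chernoff

variable {ι α : Type*} [Fintype ι] [Fintype α]

theorem sum_prod_mul_two_pow_card_le_exp (w : ι → α → ℝ) (hw0 : ∀ i a, 0 ≤ w i a)
    (hw1 : ∀ i, ∑ a, w i a ≤ 1) (A : ι → Finset α) :
    ∑ g : ι → α, (∏ i, w i (g i)) * 2 ^ #{i | g i ∈ A i}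
      ≤ Real.exp (∑ i, ∑ a ∈ A i, w i a) := by
  have hfactor : ∀ g : ι → α, (∏ i, w i (g i)) * 2 ^ #{i | g i ∈ A i}
      = ∏ i, w i (g i) * (if g i ∈ A i then 2 else 1) := by
    intro g
    rw [prod_mul_distrib, prod_ite, prod_const, prod_const_one, mul_one]
  have hrow : ∀ i, ∑ a, w i a * (if a ∈ A i then 2 else 1) ≤ 1 + ∑ a ∈ A i, w i a := by
    intro i
    have : ∀ a, w i a * (if a ∈ A i then 2 else 1) = w i a + if a ∈ A i then w i a else 0 := by
      intro a; split_ifs <;> ring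
    simp only [this, sum_add_distrib, sum_ite_mem, univ_inter]
    linarith [hw1 i]
  calc ∑ g : ι → α, (∏ i, w i (g i)) * 2 ^ #{i | g i ∈ A i}
      = ∏ i, ∑ a, w i a * (if a ∈ A i then 2 else 1) := by
        simp only [hfactor, Fintype.prod_sum]
    _ ≤ ∏ i, (1 + ∑ a ∈ A i, w i a) :=
        prod_le_prod (fun i _ => sum_nonneg fun a _ =>
          mul_nonneg (hw0 i a) (by split_ifs <;> norm_num)) fun i _ => hrow i
    _ ≤ Real.exp (∑ i, ∑ a ∈ A i, w i a) :=
        Real.prod_one_add_le_exp_sum _ fun i => sum_nonneg fun a _ => hw0 i a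

theorem sum_prod_filter_two_mul_le_card_le_exp (w : ι → α → ℝ) (hw0 : ∀ i a, 0 ≤ w i a)
    (hw1 : ∀ i, ∑ a, w i a ≤ 1) (A : ι → Finset α) {M : ℝ}
    (hM : ∑ i, ∑ a ∈ A i, w i a ≤ M) :
    ∑ g : ι → α with 2 * M ≤ #{i | g i ∈ A i}, ∏ i, w i (g i) ≤ Real.exp (-(1 / 3) * M) := by
  have hM0 : 0 ≤ M :=
    (sum_nonneg fun i _ => sum_nonneg fun a _ => hw0 i a).trans hM
  have hprod0 : ∀ g : ι → α, 0 ≤ ∏ i, w i (g i) := fun g => prod_nonneg fun i _ => hw0 i _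
  have htwo : (2 : ℝ) ^ (2 * M) = Real.exp (2 * M * Real.log 2) := by
    rw [Real.rpow_def_of_pos two_pos, mul_comm]
  have hmarkov : ∀ g ∈ (univ : Finset (ι → α)).filter (fun g => 2 * M ≤ #{i | g i ∈ A i}),
      ∏ i, w i (g i) ≤ (2 ^ (2 * M))⁻¹ * ((∏ i, w i (g i)) * 2 ^ #{i | g i ∈ A i}) := by
    intro g hg
    rw [inv_mul_eq_div, le_div_iff₀ (by positivity)]
    refine mul_le_mul_of_nonneg_left ?_ (hprod0 g)
    rw [← Real.rpow_natCast]
    exact Real.rpow_le_rpow_of_exponent_le one_le_two (mem_filter.1 hg).2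
  calc ∑ g : ι → α with 2 * M ≤ #{i | g i ∈ A i}, ∏ i, w i (g i)
      ≤ ∑ g : ι → α with 2 * M ≤ #{i | g i ∈ A i},
          (2 ^ (2 * M))⁻¹ * ((∏ i, w i (g i)) * 2 ^ #{i | g i ∈ A i}) :=
        sum_le_sum hmarkov
    _ ≤ ∑ g : ι → α, (2 ^ (2 * M))⁻¹ * ((∏ i, w i (g i)) * 2 ^ #{i | g i ∈ A i}) :=
        sum_le_sum_of_subset_of_nonneg (filter_subset _ _)
          fun g _ _ => by have := hprod0 g; positivity
    _ ≤ (2 ^ (2 * M))⁻¹ * Real.exp M := by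
        rw [← mul_sum]
        gcongr
        exact (sum_prod_mul_two_pow_card_le_exp w hw0 hw1 A).trans (Real.exp_le_exp.2 hM)
    _ ≤ Real.exp (-(1 / 3) * M) := by
        rw [htwo, ← Real.exp_neg, ← Real.exp_add, Real.exp_le_exp]
        nlinarith [Real.log_two_gt_d9]

end Chernoff

section Independence

variable {ι α Ω : Type*} [Fintype ι] [MeasurableSpace Ω] {P : Measure Ω}

/- The `f i` are not assumed measurable, so the event is covered by atoms of the finite
product instead of being bounded through expectations. -/
theorem measure_le_sum_prod_of_iIndepFun [Fintype α] {f : ι → Ω → α}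
    (hf : iIndepFun (m := fun _ => ⊤) f P) (φ : (ι → α) → Prop) :
    P {ω | φ (fun i => f i ω)} ≤ ∑ g : ι → α with φ g, ∏ i, P {ω | f i ω = g i} := by
  have hatom : ∀ g : ι → α, P {ω | ∀ i, f i ω = g i} = ∏ i, P {ω | f i ω = g i} := by
    intro g
    have := hf.measure_inter_preimage_eq_mul univ (sets := fun i => {g i})
      fun i _ => MeasurableSpace.measurableSet_top
    simpa [Set.preimage, Set.iInter_ofPred] using this
  calc P {ω | φ (fun i => f i ω)}
      ≤ P (⋃ g ∈ (univ : Finset (ι → α)).filter φ, {ω | ∀ i, f i ω = g i}) := by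
        refine measure_mono fun ω hω => Set.mem_biUnion ?_ fun i => rfl
        simpa using hω
    _ ≤ ∑ g : ι → α with φ g, P {ω | ∀ i, f i ω = g i} := measure_biUnion_finset_le _ _
    _ = ∑ g : ι → α with φ g, ∏ i, P {ω | f i ω = g i} := by simp only [hatom]

theorem measure_two_mul_le_card_le_exp [Fintype α] {f : ι → Ω → α}
    (hf : iIndepFun (m := fun _ => ⊤) f P) (w : ι → α → ℝ) (hw0 : ∀ i a, 0 ≤ w i a)
    (hw1 : ∀ i, ∑ a, w i a ≤ 1) (hP : ∀ i a, P {ω | f i ω = a} = ENNReal.ofReal (w i a))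
    (A : ι → Finset α) {M : ℝ} (hM : ∑ i, ∑ a ∈ A i, w i a ≤ M) :
    P {ω | 2 * M ≤ #{i | f i ω ∈ A i}} ≤ ENNReal.ofReal (Real.exp (-(1 / 3) * M)) := by
  calc P {ω | 2 * M ≤ #{i | f i ω ∈ A i}}
      ≤ ∑ g : ι → α with 2 * M ≤ #{i | g i ∈ A i}, ∏ i, P {ω | f i ω = g i} :=
        measure_le_sum_prod_of_iIndepFun hf fun g => 2 * M ≤ #{i | g i ∈ A i}
    _ = ENNReal.ofReal (∑ g : ι → α with 2 * M ≤ #{i | g i ∈ A i}, ∏ i, w i (g i)) := by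
        rw [ENNReal.ofReal_sum_of_nonneg fun g _ => prod_nonneg fun i _ => hw0 i _]
        simp only [hP, ENNReal.ofReal_prod_of_nonneg fun i _ => hw0 i _]
    _ ≤ ENNReal.ofReal (Real.exp (-(1 / 3) * M)) :=
        ENNReal.ofReal_le_ofReal (sum_prod_filter_two_mul_le_card_le_exp w hw0 hw1 A hM)

theorem one_sub_card_mul_le_measure_forall_not [IsProbabilityMeasure P] (B : ι → Ω → Prop)
    {ε : ℝ≥0∞} (hB : ∀ i, P {ω | B i ω} ≤ ε) :
    1 - Fintype.card ι * ε ≤ P {ω | ∀ i, ¬ B i ω} := by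
  have hunion : P (⋃ i, {ω | B i ω}) ≤ Fintype.card ι * ε :=
    (measure_iUnion_fintype_le P _).trans <| by
      simpa using sum_le_sum fun i (_ : i ∈ univ) => hB i
  have hcompl : {ω | ∀ i, ¬ B i ω} = (⋃ i, {ω | B i ω})ᶜ := by ext; simp
  rw [hcompl, tsub_le_iff_right, ← measure_univ (μ := P), ← Set.compl_union_self]
  exact (measure_union_le _ _).trans (add_le_add_right hunion _)

end Independence

theorem mul_exp_neg_le_rpow_neg_one {η x n : ℝ} (hη : 0 < η) (hn : Real.exp (6 / η) ≤ n)
    (hx : η * Real.log n ^ 2 ≤ x) : n * Real.exp (-(1 / 3) * x) ≤ n ^ (-1 : ℝ) := by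
  have hn0 : 0 < n := (Real.exp_pos _).trans_le hn
  have hlog : 6 ≤ η * Real.log n := by
    rw [← Real.le_log_iff_exp_le hn0, div_le_iff₀ hη] at hn
    linarith
  have hlogn : 0 < Real.log n := pos_of_mul_pos_right (by linarith) hη.le
  have hexp : -(1 / 3) * x ≤ -2 * Real.log n := by
    nlinarith [mul_le_mul_of_nonneg_right hlog hlogn.le]
  calc n * Real.exp (-(1 / 3) * x) ≤ Real.exp (Real.log n) * Real.exp (-2 * Real.log n) := by
        rw [Real.exp_log hn0]
        gcongr
    _ = n ^ (-1 : ℝ) := by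
        rw [← Real.exp_add, Real.rpow_def_of_pos hn0]
        ring_nf

namespace LoadBalancing

variable {C 𝕊 Ω : Type*}

section Degrees

variable [Fintype C] (Nb : C → Finset 𝕊)

theorem sum_card_inter_eq_sum_serverDeg (s : Finset 𝕊) :
    ∑ v, #(s ∩ Nb v) = ∑ u ∈ s, serverDeg Nb u := by
  simp only [serverDeg, card_filter, ← filter_mem_eq_inter]
  exact sum_comm

theorem sum_card_inter_div_card_le {Δmin Δmax : ℕ} (hΔ : 0 < Δmin)
    (hmin : ∀ v, Δmin ≤ #(Nb v)) (hmax : ∀ u, serverDeg Nb u ≤ Δmax) (s : Finset 𝕊) :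
    ∑ v, (#(s ∩ Nb v) : ℝ) / #(Nb v) ≤ #s * Δmax / Δmin := by
  calc ∑ v, (#(s ∩ Nb v) : ℝ) / #(Nb v) ≤ ∑ v, (#(s ∩ Nb v) : ℝ) / Δmin := by
        gcongr with v
        exact_mod_cast hmin v
    _ = (∑ u ∈ s, serverDeg Nb u : ℕ) / Δmin := by
        rw [← sum_div, ← sum_card_inter_eq_sum_serverDeg]
        push_cast
        rfl
    _ ≤ #s * Δmax / Δmin := by
        gcongr
        exact_mod_cast sum_le_card_nsmul _ _ _ fun u _ => hmax u

theorem min_card_le_max_serverDeg [Fintype 𝕊] [Nonempty C]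
    (hcard : Fintype.card C = Fintype.card 𝕊) {Δmin Δmax : ℕ} (hmin : ∀ v, Δmin ≤ #(Nb v))
    (hmax : ∀ u, serverDeg Nb u ≤ Δmax) : Δmin ≤ Δmax := by
  have hsum := sum_card_inter_eq_sum_serverDeg Nb univ
  have hlow := card_nsmul_le_sum univ (fun v => #(Nb v)) Δmin fun v _ => hmin v
  have hupp := sum_le_card_nsmul univ (serverDeg Nb) Δmax fun u _ => hmax u
  simp only [univ_inter, card_univ, smul_eq_mul, ← hcard] at hsum hlow hupp
  exact Nat.le_of_mul_le_mul_left (hlow.trans (hsum ▸ hupp)) Fintype.card_pos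

end Degrees

section FirstRound

variable [Fintype C] {d : ℕ} (Nb : C → Finset 𝕊) (choice : ℕ → C → Fin d → Ω → 𝕊)

theorem recvNbhd_one_eq_card (τ : ℝ) (v : C) (ω : Ω) :
    recvNbhd τ Nb choice 1 v ω = #{p : C × Fin d | choice 1 p.1 p.2 ω ∈ Nb v} := by
  simp only [recvNbhd, recvAt, recvCount, sState, env, Nat.sub_self, true_and]
  exact sum_card_fiberwise_eq_card_filter _ _ _

theorem Kval_one_le_of_recvNbhd_le {c : ℝ} (hc : 0 < c) (hd : 0 < d) {v : C}
    (hv : 0 < #(Nb v)) {ω : Ω} {x : ℝ}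
    (h : (recvNbhd (c * d) Nb choice 1 v ω : ℝ) ≤ 2 * d * #(Nb v) * x) :
    Kval c Nb choice 1 v ω ≤ 2 / c * x := by
  rw [Kval, Icc_self, sum_singleton, div_le_iff₀ (by positivity)]
  calc (recvNbhd (c * d) Nb choice 1 v ω : ℝ) ≤ 2 * d * #(Nb v) * x := h
    _ = 2 / c * x * (c * d * #(Nb v)) := by field_simp

end FirstRound

namespace UnifIndep

variable [MeasurableSpace Ω] {P : Measure Ω} {Nb : C → Finset 𝕊} {d : ℕ}
  {choice : ℕ → C → Fin d → Ω → 𝕊}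

theorem iIndepFun_round (hU : UnifIndep P Nb choice) (t : ℕ) :
    iIndepFun (m := fun _ => ⊤) (fun p : C × Fin d => choice t p.1 p.2) P :=
  hU.2.precomp (g := fun p : C × Fin d => (t, p.1, p.2)) fun p q h => by
    simpa [Prod.ext_iff] using h

theorem measure_eq_ofReal (hU : UnifIndep P Nb choice) (t : ℕ) (v : C) (i : Fin d) (u : 𝕊) :
    P {ω | choice t v i ω = u} = ENNReal.ofReal (if u ∈ Nb v then (#(Nb v) : ℝ)⁻¹ else 0) := by
  rw [hU.1]
  split_ifs with hu
  · rw [ENNReal.ofReal_inv_of_pos (by exact_mod_cast card_pos.2 ⟨u, hu⟩),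
      ENNReal.ofReal_natCast]
  · simp

theorem measure_recvNbhd_one_ge_le_exp [Fintype C] [Fintype 𝕊] (hU : UnifIndep P Nb choice)
    {Δmin Δmax : ℕ} (hΔ : 0 < Δmin) (hmin : ∀ v, Δmin ≤ #(Nb v))
    (hmax : ∀ u, serverDeg Nb u ≤ Δmax) (τ : ℝ) (v : C) :
    P {ω | 2 * d * (#(Nb v) : ℝ) * ((Δmax : ℝ) / Δmin) ≤ recvNbhd τ Nb choice 1 v ω}
      ≤ ENNReal.ofReal (Real.exp (-(1 / 3) * d * Δmax)) := by
  have hpos : ∀ w, (0 : ℝ) < #(Nb w) := fun w => by exact_mod_cast hΔ.trans_le (hmin w)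
  set M : ℝ := d * (#(Nb v) * Δmax / Δmin)
  have hload : ∑ p : C × Fin d, ∑ u ∈ Nb v,
      (if u ∈ Nb p.1 then (#(Nb p.1) : ℝ)⁻¹ else 0) ≤ M := by
    simp only [sum_ite_mem, sum_const, nsmul_eq_mul, ← div_eq_mul_inv,
      Fintype.sum_prod_type, card_univ, Fintype.card_fin, ← mul_sum]
    exact mul_le_mul_of_nonneg_left (sum_card_inter_div_card_le Nb hΔ hmin hmax _) d.cast_nonneg
  have hrow : ∀ p : C × Fin d, ∑ u, (if u ∈ Nb p.1 then (#(Nb p.1) : ℝ)⁻¹ else 0) ≤ 1 := by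
    intro p
    simp [sum_ite_mem, (hpos p.1).ne']
  have hM : d * Δmax ≤ M := by
    refine mul_le_mul_of_nonneg_left ?_ d.cast_nonneg
    rw [le_div_iff₀ (by exact_mod_cast hΔ), mul_comm]
    exact mul_le_mul_of_nonneg_right (by exact_mod_cast hmin v) Δmax.cast_nonneg
  calc P {ω | 2 * d * (#(Nb v) : ℝ) * ((Δmax : ℝ) / Δmin) ≤ recvNbhd τ Nb choice 1 v ω}
      = P {ω | 2 * M ≤ #{p : C × Fin d | choice 1 p.1 p.2 ω ∈ Nb v}} := by
        simp only [recvNbhd_one_eq_card, M]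
        ring_nf
    _ ≤ ENNReal.ofReal (Real.exp (-(1 / 3) * M)) :=
        measure_two_mul_le_card_le_exp (hU.iIndepFun_round 1) _ (fun _ _ => by positivity) hrow
          (fun p u => hU.measure_eq_ofReal 1 p.1 p.2 u) (fun _ => Nb v) hload
    _ ≤ ENNReal.ofReal (Real.exp (-(1 / 3) * d * Δmax)) :=
        ENNReal.ofReal_le_ofReal (Real.exp_le_exp.2 (by linarith))

variable [IsProbabilityMeasure P]

theorem card_pos [Fintype 𝕊] (hU : UnifIndep P Nb choice) (t : ℕ) (i : Fin d) (v : C) :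
    0 < #(Nb v) := by
  by_contra! h
  have hempty : Nb v = ∅ := card_eq_zero.1 (Nat.le_zero.1 h)
  have hcover : (Set.univ : Set Ω) = ⋃ u, {ω | choice t v i ω = u} := by ext; simp
  have := measure_iUnion_fintype_le P fun u => {ω | choice t v i ω = u}
  simp [← hcover, hU.1, hempty] at this

theorem pos_of_isLeast [Fintype 𝕊] (hU : UnifIndep P Nb choice) (hd : 0 < d) {Δmin : ℕ}
    (hmin : IsLeast (Set.range fun v => #(Nb v)) Δmin) : 0 < Δmin := by
  obtain ⟨v, rfl⟩ := hmin.1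
  exact hU.card_pos 1 ⟨0, hd⟩ v

variable [Fintype C] [Fintype 𝕊] {Δmin Δmax : ℕ}

theorem one_sub_card_mul_exp_le_measure_recvNbhd_one_lt (hU : UnifIndep P Nb choice)
    (hΔ : 0 < Δmin) (hmin : ∀ v, Δmin ≤ #(Nb v)) (hmax : ∀ u, serverDeg Nb u ≤ Δmax) (τ : ℝ) :
    1 - Fintype.card C * ENNReal.ofReal (Real.exp (-(1 / 3) * d * Δmax))
      ≤ P {ω | ∀ v, (recvNbhd τ Nb choice 1 v ω : ℝ) < 2 * d * #(Nb v) * ((Δmax : ℝ) / Δmin)} := by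
  simpa only [not_le] using one_sub_card_mul_le_measure_forall_not _
    (hU.measure_recvNbhd_one_ge_le_exp hΔ hmin hmax τ)

theorem one_sub_card_mul_exp_le_measure_Kval_one_le (hU : UnifIndep P Nb choice) (hd : 0 < d)
    {c : ℝ} (hc : 0 < c) (hΔ : 0 < Δmin) (hmin : ∀ v, Δmin ≤ #(Nb v))
    (hmax : ∀ u, serverDeg Nb u ≤ Δmax) :
    1 - Fintype.card C * ENNReal.ofReal (Real.exp (-(1 / 3) * d * Δmax))
      ≤ P {ω | ∀ v, Kval c Nb choice 1 v ω ≤ 2 / c * ((Δmax : ℝ) / Δmin)} :=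
  (hU.one_sub_card_mul_exp_le_measure_recvNbhd_one_lt hΔ hmin hmax (c * d)).trans <|
    measure_mono fun _ hω v =>
      Kval_one_le_of_recvNbhd_le Nb choice hc hd (hΔ.trans_le (hmin v)) (hω v).le

theorem one_sub_rpow_neg_one_le_measure_first_round (hU : UnifIndep P Nb choice) (hd : 0 < d)
    {c : ℝ} (hc : 0 < c) (hcard : Fintype.card C = Fintype.card 𝕊) {η : ℝ} (hη : 0 < η)
    (hn : Real.exp (6 / η) ≤ Fintype.card C) (hΔ : 0 < Δmin)
    (hlog : η * Real.log (Fintype.card C) ^ 2 ≤ Δmin) (hmin : ∀ v, Δmin ≤ #(Nb v))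
    (hmax : ∀ u, serverDeg Nb u ≤ Δmax) :
    1 - ENNReal.ofReal ((Fintype.card C : ℝ) ^ (-1 : ℝ))
      ≤ P {ω | (∀ v, (recvNbhd (c * d) Nb choice 1 v ω : ℝ) ≤ 2 * d * #(Nb v) * ((Δmax : ℝ) / Δmin))
          ∧ ∀ v, Kval c Nb choice 1 v ω ≤ 2 / c * ((Δmax : ℝ) / Δmin)} := by
  have : Nonempty C := Fintype.card_pos_iff.1 (by exact_mod_cast (Real.exp_pos _).trans_le hn)
  have hΔle : (Δmin : ℝ) ≤ d * Δmax := by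
    have hle : (Δmin : ℝ) ≤ Δmax := by
      exact_mod_cast min_card_le_max_serverDeg Nb hcard hmin hmax
    have hd' : (1 : ℝ) ≤ d := by exact_mod_cast hd
    nlinarith
  have hsmall := mul_exp_neg_le_rpow_neg_one hη hn (hlog.trans hΔle)
  have hfail : (Fintype.card C : ℝ≥0∞) * ENNReal.ofReal (Real.exp (-(1 / 3) * d * Δmax))
      ≤ ENNReal.ofReal ((Fintype.card C : ℝ) ^ (-1 : ℝ)) := by
    rw [← ENNReal.ofReal_natCast, ← ENNReal.ofReal_mul (by positivity)]
    exact ENNReal.ofReal_le_ofReal (by simpa only [mul_assoc] using hsmall)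
  refine (tsub_le_tsub_left hfail 1).trans <|
    (hU.one_sub_card_mul_exp_le_measure_recvNbhd_one_lt hΔ hmin hmax (c * d)).trans <|
      measure_mono fun _ hω => ⟨fun v => (hω v).le, fun v => ?_⟩
  exact Kval_one_le_of_recvNbhd_le Nb choice hc hd (hΔ.trans_le (hmin v)) (hω v).le

end UnifIndep

/-- Lemma 17, first round, almost-regular case. For all `c, d ≥ 1`
and each client `v`,
`P(r_1(N(v)) ≥ 2d·Δ_v·(Δ_max(S)/Δ_min(C))) ≤ e^{−(1/3)·d·Δ_max(S)}`; consequently, with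
probability at least `1 − n·e^{−(1/3)·d·Δ_max(S)}`, `K_1 ≤ (2/c)·(Δ_max(S)/Δ_min(C))`.
In particular, if `Δ_min(C) ≥ η log² n`, these bounds hold with high probability. -/
theorem saer_first_round_almost_regular :
    (∀ (n : ℕ) (C 𝕊 : Type) [Fintype C] [Fintype 𝕊],
      Fintype.card C = n → Fintype.card 𝕊 = n →
      ∀ (Nb : C → Finset 𝕊) (Δmin Δmax : ℕ),
        IsLeast (Set.range fun v => (Nb v).card) Δmin →
        IsGreatest (Set.range fun u => serverDeg Nb u) Δmax →
      ∀ (d : ℕ), 1 ≤ d → ∀ (c : ℝ), 1 ≤ c →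
      ∀ (Ω : Type) [MeasurableSpace Ω] (P : Measure Ω) [IsProbabilityMeasure P]
        (choice : ℕ → C → Fin d → Ω → 𝕊), UnifIndep P Nb choice →
        (∀ v : C,
          P {ω | 2 * d * ((Nb v).card : ℝ) * ((Δmax : ℝ) / (Δmin : ℝ)) ≤
                (recvNbhd (c * d) Nb choice 1 v ω : ℝ)}
            ≤ ENNReal.ofReal (Real.exp (-(1 / 3) * d * (Δmax : ℝ)))) ∧
        1 - n * ENNReal.ofReal (Real.exp (-(1 / 3) * d * (Δmax : ℝ))) ≤
          P {ω | ∀ v : C,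
              Kval c Nb choice 1 v ω ≤ (2 / c) * ((Δmax : ℝ) / (Δmin : ℝ))}) ∧
    (∀ η : ℝ, 0 < η → ∀ (d : ℕ), 1 ≤ d → ∀ (c : ℝ), 1 ≤ c →
      ∃ γ : ℝ, 0 < γ ∧ ∃ N : ℕ, ∀ n : ℕ, N ≤ n →
      ∀ (C 𝕊 : Type) [Fintype C] [Fintype 𝕊],
        Fintype.card C = n → Fintype.card 𝕊 = n →
        ∀ (Nb : C → Finset 𝕊) (Δmin Δmax : ℕ),
          IsLeast (Set.range fun v => (Nb v).card) Δmin →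
          IsGreatest (Set.range fun u => serverDeg Nb u) Δmax →
          η * Real.log n ^ 2 ≤ (Δmin : ℝ) →
        ∀ (Ω : Type) [MeasurableSpace Ω] (P : Measure Ω) [IsProbabilityMeasure P]
          (choice : ℕ → C → Fin d → Ω → 𝕊), UnifIndep P Nb choice →
          1 - ENNReal.ofReal ((n : ℝ) ^ (-γ)) ≤
            P {ω | (∀ v : C, (recvNbhd (c * d) Nb choice 1 v ω : ℝ) ≤
                      2 * d * ((Nb v).card : ℝ) * ((Δmax : ℝ) / (Δmin : ℝ))) ∧
                   (∀ v : C,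
                      Kval c Nb choice 1 v ω ≤ (2 / c) * ((Δmax : ℝ) / (Δmin : ℝ)))}) := by
  refine ⟨fun n C 𝕊 _ _ hC _ Nb Δmin Δmax hmin hmax d hd c hc Ω _ P _ choice hU => ?_,
    fun η hη d hd c hc => ⟨1, one_pos, ⌈Real.exp (6 / η)⌉₊, fun n hn C 𝕊 _ _ hC h𝕊 Nb Δmin Δmax
      hmin hmax hlog Ω _ P _ choice hU => ?_⟩⟩
  · subst hC
    have hΔ := hU.pos_of_isLeast hd hmin
    exact ⟨hU.measure_recvNbhd_one_ge_le_exp hΔ (fun v => hmin.2 ⟨v, rfl⟩)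
        (fun u => hmax.2 ⟨u, rfl⟩) _,
      hU.one_sub_card_mul_exp_le_measure_Kval_one_le hd (by linarith) hΔ
        (fun v => hmin.2 ⟨v, rfl⟩) (fun u => hmax.2 ⟨u, rfl⟩)⟩
  · subst hC
    exact hU.one_sub_rpow_neg_one_le_measure_first_round hd (by linarith) h𝕊.symm hη
      (Nat.ceil_le.1 hn) (hU.pos_of_isLeast hd hmin) hlog (fun v => hmin.2 ⟨v, rfl⟩)
      (fun u => hmax.2 ⟨u, rfl⟩)

end LoadBalancing
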